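/- Let Σ be a finite alphabet with at least two elements and let θ be a primitive substitution on Σ. Then there exists a constant C > 0 such that for all integers n ≥ 1, the number p_{F[θ]}(n) of words of length exactly n in the language F[θ] satisfies p_{F[θ]}(n) ≤ C·n. -/

import Mathlib

/-- The extension of a substitution `θ` to finite words, by concatenation:
`θ(w₁…w_m) = θ(w₁)…θ(w_m)`. -/
def substWord {α : Type*} (θ : α → List α) : List α → List α :=
  fun w => w.foldr (fun a acc => θ a ++ acc) []

/-- `θ` is a substitution: every letter maps to a nonempty word. -/
def IsSubstitution {α : Type*} (θ : α → List α) : Prop := ∀ a, θ a ≠ []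

/-- `θ` is primitive: there is `k ≥ 1` such that for all letters `a, b`,
the letter `b` occurs in `θ^k(a)`. -/
def IsPrimitiveSubst {α : Type*} (θ : α → List α) : Prop :=
  ∃ k, 1 ≤ k ∧ ∀ a b : α, b ∈ (substWord θ)^[k] [a]

/-- The language `F[θ]`: all nonempty factors (contiguous subwords) of the words
`θ^m(a)`, over all `m ≥ 1` and letters `a`. -/
def substLang {α : Type*} (θ : α → List α) : Set (List α) :=
  {w | w ≠ [] ∧ ∃ m, 1 ≤ m ∧ ∃ a : α, w <:+: (substWord θ)^[m] [a]}

/-!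
Let `k` be a primitivity exponent and `L = max_a |θ a|`. Since every letter occurs in every
`θ^k(a)`, the blocks `θ^j(a)` of a fixed level `j` have lengths within a factor `L^k` of each
other, and they grow exponentially in `j`. Hence for each `n` there is a level `m` all of whose
blocks have length between `n` and `L^(k+1) n`. Primitivity also places every word of `F[θ]`
inside some `θ^m(u)`, so a factor of length `n` lies in the concatenation of two level-`m`
blocks: it is determined by a pair of letters and a starting position below `2 L^(k+1) n`.
-/

section SubstWord

variable {α : Type*} (θ : α → List α)

theorem substWord_nil : substWord θ [] = [] := rfl

theorem substWord_cons (a : α) (u : List α) : substWord θ (a :: u) = θ a ++ substWord θ u := rfl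

theorem substWord_append (u v : List α) :
    substWord θ (u ++ v) = substWord θ u ++ substWord θ v := by
  induction u with
  | nil => rfl
  | cons a u ih => simp [substWord_cons, ih]

theorem substWord_iterate_append (m : ℕ) (u v : List α) :
    (substWord θ)^[m] (u ++ v) = (substWord θ)^[m] u ++ (substWord θ)^[m] v := by
  induction m generalizing u v with
  | zero => rfl
  | succ m ih => simp only [Function.iterate_succ_apply, substWord_append, ih]

theorem substWord_iterate (m : ℕ) :
    (substWord θ)^[m] = substWord fun a => (substWord θ)^[m] [a] := by
  funext u
  induction u with
  | nil => exact Function.iterate_fixed (substWord_nil θ) m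
  | cons a u ih =>
    rw [substWord_cons, ← ih, ← substWord_iterate_append, List.singleton_append]

theorem length_substWord_le {L : ℕ} (hL : ∀ a, (θ a).length ≤ L) (u : List α) :
    (substWord θ u).length ≤ L * u.length := by
  induction u with
  | nil => simp [substWord_nil]
  | cons a u ih =>
    rw [substWord_cons, List.length_append, List.length_cons, Nat.mul_succ]
    linarith [hL a]

theorem le_length_substWord {c : ℕ} (hc : ∀ a, c ≤ (θ a).length) (u : List α) :
    c * u.length ≤ (substWord θ u).length := by
  induction u with
  | nil => simp [substWord_nil]
  | cons a u ih =>
    rw [substWord_cons, List.length_append, List.length_cons, Nat.mul_succ]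
    linarith [hc a]

theorem length_substWord_iterate_le {L : ℕ} (hL : ∀ a, (θ a).length ≤ L) (m : ℕ)
    (u : List α) : ((substWord θ)^[m] u).length ≤ L ^ m * u.length := by
  induction m generalizing u with
  | zero => simp
  | succ m ih =>
    rw [Function.iterate_succ_apply, pow_succ, mul_assoc]
    exact (ih _).trans (Nat.mul_le_mul_left _ (length_substWord_le θ hL u))

theorem le_length_substWord_iterate {c : ℕ} (hc : ∀ a, c ≤ (θ a).length) (m : ℕ)
    (u : List α) : c ^ m * u.length ≤ ((substWord θ)^[m] u).length := by
  induction m generalizing u with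
  | zero => simp
  | succ m ih =>
    rw [Function.iterate_succ_apply, pow_succ, mul_assoc]
    exact (Nat.mul_le_mul_left _ (le_length_substWord θ hc u)).trans (ih _)

theorem one_le_length_substWord_iterate (hθ : IsSubstitution θ) (m : ℕ) (a : α) :
    1 ≤ ((substWord θ)^[m] [a]).length := by
  simpa using le_length_substWord_iterate θ (fun a => List.length_pos_iff.mpr (hθ a)) m [a]

theorem iterate_infix_iterate_add_of_mem {k : ℕ} {a b : α} (h : a ∈ (substWord θ)^[k] [b])
    (j : ℕ) : (substWord θ)^[j] [a] <:+: (substWord θ)^[j + k] [b] := by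
  obtain ⟨s, t, hst⟩ := List.append_of_mem h
  rw [Function.iterate_add_apply, hst, List.append_cons, substWord_iterate_append,
    substWord_iterate_append]
  exact List.infix_append _ _ _

theorem exists_infix_substWord_iterate_of_mem_substLang (hprim : IsPrimitiveSubst θ)
    {w : List α} (hw : w ∈ substLang θ) (m : ℕ) : ∃ u, w <:+: (substWord θ)^[m] u := by
  obtain ⟨k, hk1, hk⟩ := hprim
  obtain ⟨-, M, -, c, hwc⟩ := hw
  have hblock : ∀ i, (substWord θ)^[M] [c] <:+: (substWord θ)^[M + k * i] [c] := by
    intro i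
    induction i with
    | zero => exact List.infix_refl _
    | succ i ih =>
      rw [Nat.mul_succ, ← Nat.add_assoc]
      exact ih.trans (iterate_infix_iterate_add_of_mem θ (hk c c) _)
  have hm : m ≤ M + k * m := le_add_left (Nat.le_mul_of_pos_left m hk1)
  refine ⟨(substWord θ)^[M + k * m - m] [c], hwc.trans ?_⟩
  rw [← Function.iterate_add_apply, Nat.add_sub_cancel' hm]
  exact hblock m

end SubstWord

section Primitive

variable {α : Type*} (θ : α → List α) {k : ℕ} (hk : ∀ a b : α, b ∈ (substWord θ)^[k] [a])
include hk

theorem pow_card_le_length_iterate [Fintype α] (i : ℕ) (a : α) :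
    Fintype.card α ^ i ≤ ((substWord θ)^[k * i] [a]).length := by
  classical
  have hcard : ∀ b, Fintype.card α ≤ ((substWord θ)^[k] [b]).length := fun b =>
    calc Fintype.card α ≤ ((substWord θ)^[k] [b]).toFinset.card :=
          Finset.card_le_card fun c _ => List.mem_toFinset.mpr (hk b c)
      _ ≤ _ := List.toFinset_card_le _
  rw [Function.iterate_mul, substWord_iterate θ k]
  simpa using le_length_substWord_iterate _ hcard i [a]

theorem length_iterate_le_pow_mul_length_iterate (hθ : IsSubstitution θ) {L : ℕ}
    (hL : ∀ a, (θ a).length ≤ L) (j : ℕ) (a b : α) :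
    ((substWord θ)^[j] [b]).length ≤ L ^ k * ((substWord θ)^[j] [a]).length := by
  by_cases hkj : k ≤ j
  · obtain ⟨i, rfl⟩ := Nat.exists_eq_add_of_le hkj
    calc ((substWord θ)^[k + i] [b]).length
        ≤ L ^ k * ((substWord θ)^[i] [b]).length := by
          rw [Function.iterate_add_apply]; exact length_substWord_iterate_le θ hL k _
      _ ≤ L ^ k * ((substWord θ)^[i + k] [a]).length :=
          Nat.mul_le_mul_left _ (iterate_infix_iterate_add_of_mem θ (hk a b) i).length_le
      _ = L ^ k * ((substWord θ)^[k + i] [a]).length := by rw [Nat.add_comm]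
  · have hL1 : 1 ≤ L := (List.length_pos_iff.mpr (hθ a)).trans_le (hL a)
    calc ((substWord θ)^[j] [b]).length ≤ L ^ j := by
          simpa using length_substWord_iterate_le θ hL j [b]
      _ ≤ L ^ k := Nat.pow_le_pow_right hL1 (by omega)
      _ ≤ L ^ k * ((substWord θ)^[j] [a]).length :=
          Nat.le_mul_of_pos_right _ (one_le_length_substWord_iterate θ hθ j a)

theorem exists_iterate_length_mem_Icc [Fintype α] (hα : 2 ≤ Fintype.card α)
    (hθ : IsSubstitution θ) {L : ℕ} (hL : ∀ a, (θ a).length ≤ L) {n : ℕ} (hn : 1 ≤ n) :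
    ∃ m, ∀ a, ((substWord θ)^[m] [a]).length ∈ Set.Icc n (L ^ (k + 1) * n) := by
  classical
  have hex : ∃ m, ∀ a, n ≤ ((substWord θ)^[m] [a]).length := ⟨k * n, fun a =>
    calc n ≤ 2 ^ n := n.lt_two_pow_self.le
      _ ≤ Fintype.card α ^ n := Nat.pow_le_pow_left hα n
      _ ≤ _ := pow_card_le_length_iterate θ hk n a⟩
  refine ⟨Nat.find hex, fun b => ⟨Nat.find_spec hex b, ?_⟩⟩
  have hL1 : 1 ≤ L := (List.length_pos_iff.mpr (hθ b)).trans_le (hL b)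
  rcases hm : Nat.find hex with _ | j
  · simpa using Nat.one_le_iff_ne_zero.mpr (Nat.mul_ne_zero (by positivity) (by omega))
  · obtain ⟨a₀, ha₀⟩ : ∃ a₀, ((substWord θ)^[j] [a₀]).length < n := by
      simpa using Nat.find_min hex (hm ▸ j.lt_succ_self)
    calc ((substWord θ)^[j + 1] [b]).length ≤ L * ((substWord θ)^[j] [b]).length := by
          rw [Function.iterate_succ_apply']; simpa using length_substWord_le θ hL _
      _ ≤ L * (L ^ k * ((substWord θ)^[j] [a₀]).length) :=
          Nat.mul_le_mul_left _ (length_iterate_le_pow_mul_length_iterate θ hk hθ hL j a₀ b)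
      _ ≤ L ^ (k + 1) * n := by
          rw [← mul_assoc, ← pow_succ']; exact Nat.mul_le_mul_left _ ha₀.le

end Primitive

section Factors

variable {α : Type*}

theorem exists_infix_append_of_infix_substWord [Nonempty α] {σ : α → List α}
    {w u : List α} (hσ : ∀ a, w.length ≤ (σ a).length) (hw : w <:+: substWord σ u) :
    ∃ a b, w <:+: σ a ++ σ b := by
  induction u with
  | nil =>
    obtain rfl : w = [] := List.infix_nil.mp hw
    exact ⟨Classical.arbitrary α, Classical.arbitrary α, List.nil_infix⟩
  | cons c u ih =>
    rw [substWord_cons, List.infix_append_iff] at hw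
    rcases hw with hw | hw | ⟨w₁, w₂, rfl, h₁, h₂⟩
    · exact ⟨c, c, hw.trans List.infix_append_left⟩
    · exact ih hw
    · obtain ⟨d, hd⟩ : ∃ d, w₂ <+: σ d := by
        cases u with
        | nil => exact ⟨c, List.prefix_nil.mp h₂ ▸ List.nil_prefix⟩
        | cons d u =>
          rw [substWord_cons] at h₂
          refine ⟨d, List.prefix_of_prefix_length_le h₂ (List.prefix_append _ _) ?_⟩
          calc w₂.length ≤ (w₁ ++ w₂).length := by simp
            _ ≤ (σ d).length := hσ d
      exact ⟨c, d, List.infix_append_iff.mpr (Or.inr (Or.inr ⟨w₁, w₂, rfl, h₁, hd⟩))⟩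

theorem ncard_le_of_forall_infix {ι : Type*} [Fintype ι] (x : ι → List α) {S : Set (List α)}
    {n N : ℕ} (hn : 1 ≤ n) (hx : ∀ i, (x i).length ≤ N)
    (hS : ∀ w ∈ S, w.length = n ∧ ∃ i, w <:+: x i) :
    S.ncard ≤ Fintype.card ι * N := by
  let g : ι × Fin N → List α := fun p => ((x p.1).drop p.2).take n
  have hsub : S ⊆ Set.range g := by
    intro w hw
    obtain ⟨hwn, i, s, t, hst⟩ := hS w hw
    have hlen := congrArg List.length hst
    simp only [List.length_append] at hlen
    refine ⟨(i, ⟨s.length, by linarith [hx i]⟩), ?_⟩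
    simp only [g, ← hst, List.append_assoc, List.drop_left, List.take_left' hwn]
  calc S.ncard ≤ (Set.range g).ncard := Set.ncard_le_ncard hsub (Set.finite_range g)
    _ ≤ Nat.card (ι × Fin N) := Finite.card_range_le g
    _ = Fintype.card ι * N := by simp

end Factors

/-- For a primitive substitution on a finite alphabet with at least two letters, the
number of words of length exactly `n` in `F[θ]` is at most `C·n`. -/
theorem stmt_0 {A : Type*} [Fintype A] (hA : 2 ≤ Fintype.card A)
    (θ : A → List A) (hsub : IsSubstitution θ) (hprim : IsPrimitiveSubst θ) :
    ∃ C : ℝ, 0 < C ∧ ∀ n : ℕ, 1 ≤ n →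
      (({w ∈ substLang θ | w.length = n}).ncard : ℝ) ≤ C * n := by
  obtain ⟨k, -, hk⟩ := id hprim
  have : Nonempty A := Fintype.card_pos_iff.mp (by omega)
  set L := Finset.univ.sup fun a => (θ a).length
  have hL : ∀ a, (θ a).length ≤ L := fun a => Finset.le_sup (f := fun a => (θ a).length)
    (Finset.mem_univ a)
  have hL0 : (0 : ℝ) < L := by
    exact_mod_cast (List.length_pos_iff.mpr (hsub (Classical.arbitrary A))).trans_le (hL _)
  have hA0 : (0 : ℝ) < Fintype.card A := by exact_mod_cast Fintype.card_pos
  refine ⟨2 * Fintype.card A ^ 2 * L ^ (k + 1), by positivity, fun n hn => ?_⟩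
  obtain ⟨m, hm⟩ := exists_iterate_length_mem_Icc θ hk hA hsub hL hn
  set block := fun a => (substWord θ)^[m] [a]
  have hfactor : ∀ w ∈ {w ∈ substLang θ | w.length = n},
      w.length = n ∧ ∃ p : A × A, w <:+: block p.1 ++ block p.2 := by
    rintro w ⟨hw, hwn⟩
    obtain ⟨u, hu⟩ := exists_infix_substWord_iterate_of_mem_substLang θ hprim hw m
    rw [substWord_iterate θ m] at hu
    simpa [hwn] using exists_infix_append_of_infix_substWord (fun a => hwn ▸ (hm a).1) hu
  have hcount := ncard_le_of_forall_infix _ (N := 2 * (L ^ (k + 1) * n)) hn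
    (fun p => by simp only [List.length_append]; linarith [(hm p.1).2, (hm p.2).2]) hfactor
  calc (({w ∈ substLang θ | w.length = n}).ncard : ℝ)
      ≤ (Fintype.card (A × A) * (2 * (L ^ (k + 1) * n)) : ℕ) := by exact_mod_cast hcount
    _ = 2 * Fintype.card A ^ 2 * L ^ (k + 1) * n := by push_cast [Fintype.card_prod]; ring
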